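/- The quadratic Casimir function 𝒞 := (1/2) Σ_{i,j,k,l} g_{ij} g_{kl} 𝒪_{ik} 𝒪_{jl} satisfies the identity 𝒞 = −4 H₁ H₂ − D², where H₁ = (1/2)(p·p − v·v), H₂ = (1/2)(π·π − u·u), D = u·p − v·π. In particular 𝒞 vanishes on the constraint surface H₁ = H₂ = D = 0. -/

import Mathlib

/-! Writing `x_i = (a_i, b_i)` and `η` for the signature of the diagonal metric `g`, the
contraction collapses `𝒞` to `½ ∑ η_i η_k (a_i b_k - a_k b_i)²`, which by Lagrange's identity for
the indefinite form `η` equals `(∑ η a²)(∑ η b²) - (∑ η a b)²`. Splitting each signed sum into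
its `p` and `q` parts gives `-2H₂`, `2H₁` and `D`. -/

open scoped BigOperators

namespace Stmt3

abbrev Phase (np nq : ℕ) := (Fin np → ℝ) × (Fin np → ℝ) × (Fin nq → ℝ) × (Fin nq → ℝ)

variable {np nq : ℕ}

def cross (a b : ℝ × ℝ) : ℝ := a.1 * b.2 - a.2 * b.1

/-- `x_k = (u_k, p_k)` for `k ≤ p`, `x_{p+k} = (π_k, v_k)` for `k ≤ q`. -/
def Xc (x : Phase np nq) : Fin (np + nq) → ℝ × ℝ :=
  Fin.addCases (fun i => (x.1 i, x.2.1 i)) (fun j => (x.2.2.2 j, x.2.2.1 j))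

/-- The observables `𝒪_{ij} = x_i × x_j`. -/
def O (i j : Fin (np + nq)) (x : Phase np nq) : ℝ := cross (Xc x i) (Xc x j)

/-- The metric `g = diag(1,…,1,−1,…,−1)` with `p` plus and `q` minus signs. -/
def gm (i k : Fin (np + nq)) : ℝ :=
  if i = k then (Fin.addCases (fun _ => (1:ℝ)) (fun _ => (-1:ℝ)) i) else 0

noncomputable def H1 (x : Phase np nq) : ℝ :=
  (1/2) * ((∑ i, (x.2.1 i)^2) - ∑ j, (x.2.2.1 j)^2)

noncomputable def H2 (x : Phase np nq) : ℝ :=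
  (1/2) * ((∑ j, (x.2.2.2 j)^2) - ∑ i, (x.1 i)^2)

noncomputable def Dc (x : Phase np nq) : ℝ :=
  (∑ i, x.1 i * x.2.1 i) - ∑ j, x.2.2.1 j * x.2.2.2 j

/-- The quadratic Casimir `𝒞 = (1/2) Σ g_{ij} g_{kl} 𝒪_{ik} 𝒪_{jl}`. -/
noncomputable def Cas (x : Phase np nq) : ℝ :=
  (1/2) * ∑ i, ∑ j, ∑ k, ∑ l, gm i j * gm k l * O i k x * O j l x

def sig : Fin (np + nq) → ℝ := Fin.addCases (fun _ => 1) (fun _ => -1)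

lemma gm_eq_ite :
    (gm : Fin (np + nq) → Fin (np + nq) → ℝ) = fun i k => if i = k then sig i else 0 :=
  rfl

lemma sum_sum_diag_contract {ι R : Type*} [Fintype ι] [DecidableEq ι] [CommSemiring R]
    (η : ι → R) (T : ι → ι → R) :
    ∑ i, ∑ j, ∑ k, ∑ l, (if i = j then η i else 0) * (if k = l then η k else 0) * T i k * T j l
      = ∑ i, ∑ k, η i * η k * T i k ^ 2 := by
  have contract : ∀ i (F : ι → R), ∑ j, (if i = j then η i else 0) * F j = η i * F i := by
    simp [ite_mul]
  simp only [mul_assoc, ← Finset.mul_sum, contract]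
  simp only [Finset.mul_sum]
  exact Finset.sum_congr rfl fun i _ => Finset.sum_congr rfl fun k _ => by ring

/-- Lagrange's identity for the indefinite form `∑ η i * a i * b i`. -/
lemma sum_sum_mul_mul_cross_sq {ι R : Type*} [Fintype ι] [CommRing R] (η a b : ι → R) :
    ∑ i, ∑ k, η i * η k * (a i * b k - a k * b i) ^ 2
      = 2 * ((∑ i, η i * a i ^ 2) * (∑ i, η i * b i ^ 2) - (∑ i, η i * a i * b i) ^ 2) := by
  set f : ι → ι → R := fun i k => η i * a i ^ 2 * (η k * b k ^ 2)
  set g : ι → ι → R := fun i k => η i * a i * b i * (η k * a k * b k)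
  have expand : ∀ i k, η i * η k * (a i * b k - a k * b i) ^ 2 = f i k + f k i - 2 * g i k :=
    fun i k => by simp only [f, g]; ring
  simp only [expand, Finset.sum_add_distrib, Finset.sum_sub_distrib, ← Finset.mul_sum]
  rw [Finset.sum_comm (f := fun i k => f k i), sq (∑ i, η i * a i * b i),
    Finset.sum_mul_sum, Finset.sum_mul_sum]
  ring

lemma O_eq (x : Phase np nq) (i k : Fin (np + nq)) :
    O i k x = (Xc x i).1 * (Xc x k).2 - (Xc x k).1 * (Xc x i).2 := by
  simp only [O, cross]; ring

lemma sum_sig_mul (x : Phase np nq) (f : ℝ × ℝ → ℝ) :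
    ∑ i, sig i * f (Xc x i) = (∑ i, f (x.1 i, x.2.1 i)) - ∑ j, f (x.2.2.2 j, x.2.2.1 j) := by
  simp [Fin.sum_univ_add, sig, Xc, sub_eq_add_neg]

lemma Cas_eq_lagrange (x : Phase np nq) :
    Cas x = (∑ i, sig i * (Xc x i).1 ^ 2) * (∑ i, sig i * (Xc x i).2 ^ 2)
      - (∑ i, sig i * (Xc x i).1 * (Xc x i).2) ^ 2 := by
  rw [Cas, gm_eq_ite, sum_sum_diag_contract]
  simp only [O_eq]
  rw [sum_sum_mul_mul_cross_sq]
  ring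

theorem casimir_identity (x : Phase np nq) :
    Cas x = -4 * H1 x * H2 x - (Dc x)^2 ∧
    (H1 x = 0 → H2 x = 0 → Dc x = 0 → Cas x = 0) := by
  have hu : ∑ i, sig i * (Xc x i).1 ^ 2 = -(2 * H2 x) := by
    rw [sum_sig_mul x (fun z => z.1 ^ 2), H2]; ring
  have hp : ∑ i, sig i * (Xc x i).2 ^ 2 = 2 * H1 x := by
    rw [sum_sig_mul x (fun z => z.2 ^ 2), H1]; ring
  have hD : ∑ i, sig i * (Xc x i).1 * (Xc x i).2 = Dc x := by
    simp only [mul_assoc]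
    rw [sum_sig_mul x (fun z => z.1 * z.2), Dc]
    simp only [mul_comm (x.2.2.1 _)]
  have hCas : Cas x = -4 * H1 x * H2 x - (Dc x)^2 := by
    rw [Cas_eq_lagrange, hu, hp, hD]; ring
  exact ⟨hCas, fun h1 h2 hD => by rw [hCas, h1, h2, hD]; ring⟩

end Stmt3
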